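/- Let X be a real Banach space and A : X ⇉ X* a maximally monotone operator of type (BR). Then cl(dom A) = cl(P_X[dom F_A]) and cl(ran A) = cl(P_{X*}[dom F_A]); consequently both dom A and ran A are nearly convex (their closures are convex). -/

import Mathlib

open Set

noncomputable section

variable {X : Type*}

/-- The domain of a set-valued operator `A : X ⇉ X*`, identified with its graph. -/
def opDom [NormedAddCommGroup X] [NormedSpace ℝ X]
    (A : Set (X × (X →L[ℝ] ℝ))) : Set X := Prod.fst '' A

/-- The range of a set-valued operator. -/
def opRan [NormedAddCommGroup X] [NormedSpace ℝ X]
    (A : Set (X × (X →L[ℝ] ℝ))) : Set (X →L[ℝ] ℝ) := Prod.snd '' A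

/-- `(x, x*)` is monotonically related to the set `S ⊆ X × X*`:
`⟨x − y, x* − y*⟩ ≥ 0` for all `(y, y*) ∈ S`. -/
def MonRel [NormedAddCommGroup X] [NormedSpace ℝ X]
    (p : X × (X →L[ℝ] ℝ)) (S : Set (X × (X →L[ℝ] ℝ))) : Prop :=
  ∀ q ∈ S, 0 ≤ (p.2 - q.2) (p.1 - q.1)

/-- `A` is a monotone operator (identified with its graph). -/
def IsMonotoneOp [NormedAddCommGroup X] [NormedSpace ℝ X]
    (A : Set (X × (X →L[ℝ] ℝ))) : Prop :=
  ∀ p ∈ A, MonRel p A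

/-- `A` is maximally monotone: it is monotone and every monotonically related
pair already belongs to the graph. -/
def IsMaxMonotoneOp [NormedAddCommGroup X] [NormedSpace ℝ X]
    (A : Set (X × (X →L[ℝ] ℝ))) : Prop :=
  IsMonotoneOp A ∧ ∀ p : X × (X →L[ℝ] ℝ), MonRel p A → p ∈ A

/-- The Fitzpatrick function of `A`, with values in `(-∞, +∞]` (modeled in `EReal`):
`F_A(x, x*) = sup_{(a,a*) ∈ A} (⟨a, x*⟩ + ⟨x, a*⟩ − ⟨a, a*⟩)`. -/
def fitz [NormedAddCommGroup X] [NormedSpace ℝ X]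
    (A : Set (X × (X →L[ℝ] ℝ))) (x : X) (x' : X →L[ℝ] ℝ) : EReal :=
  ⨆ a ∈ A, ((x' a.1 + a.2 x - a.2 a.1 : ℝ) : EReal)

/-- The domain of the Fitzpatrick function: the set of pairs where `F_A < +∞`. -/
def fitzDom [NormedAddCommGroup X] [NormedSpace ℝ X]
    (A : Set (X × (X →L[ℝ] ℝ))) : Set (X × (X →L[ℝ] ℝ)) :=
  {q | fitz A q.1 q.2 < ⊤}

/-- `J_p(x) = (1/p) ∂‖·‖^p (x)`, the subdifferential at `x` of `y ↦ ‖y‖^p / p`. -/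
def Jmap [NormedAddCommGroup X] [NormedSpace ℝ X]
    (p : ℝ) (x : X) : Set (X →L[ℝ] ℝ) :=
  {x' | ∀ y : X, x' (y - x) + ‖x‖ ^ p / p ≤ ‖y‖ ^ p / p}

/-- The graph of the operator `A + λ J_p(· − z)`. -/
def sumGraph [NormedAddCommGroup X] [NormedSpace ℝ X]
    (A : Set (X × (X →L[ℝ] ℝ))) (lam p : ℝ) (z : X) :
    Set (X × (X →L[ℝ] ℝ)) :=
  {q | ∃ a' b' : X →L[ℝ] ℝ, (q.1, a') ∈ A ∧ b' ∈ Jmap p (q.1 - z) ∧ q.2 = a' + lam • b'}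

/-- `A` is of type (BR): whenever `α, β > 0` and
`inf_{(a,a*) ∈ gra A} ⟨x − a, x* − a*⟩ > −αβ`, there exists `(b, b*) ∈ gra A` with
`‖x − b‖ < α` and `‖x* − b*‖ < β`. -/
def IsBRtype [NormedAddCommGroup X] [NormedSpace ℝ X]
    (A : Set (X × (X →L[ℝ] ℝ))) : Prop :=
  ∀ (x : X) (x' : X →L[ℝ] ℝ) (α β : ℝ), 0 < α → 0 < β →
    (∃ c : ℝ, -(α * β) < c ∧ ∀ a ∈ A, c ≤ (x' - a.2) (x - a.1)) →
    ∃ b ∈ A, ‖x - b.1‖ < α ∧ ‖x' - b.2‖ < β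

/-!
The Fitzpatrick function is a supremum of affine functions, so its domain is convex, and by
monotonicity it is finite on the graph. Conversely, `(x, x*) ∈ dom F_A` means exactly that
`⟨x − a, x* − a*⟩` is bounded below by some `c` over the graph; since `α β` can be made larger
than `-c` with either factor as small as we like, property (BR) yields graph points whose first
(or second) component is arbitrarily close to `x` (or `x*`).
-/

section

variable [NormedAddCommGroup X] [NormedSpace ℝ X] {A : Set (X × (X →L[ℝ] ℝ))}

lemma mem_fitzDom_iff {q : X × (X →L[ℝ] ℝ)} :
    q ∈ fitzDom A ↔ ∃ M : ℝ, ∀ a ∈ A, q.2 a.1 + a.2 q.1 - a.2 a.1 ≤ M := by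
  constructor
  · intro hq
    obtain ⟨M, hlt, -⟩ := EReal.lt_iff_exists_real_btwn.1 hq
    refine ⟨M, fun a ha => ?_⟩
    exact_mod_cast (le_iSup₂ (f := fun a (_ : a ∈ A) =>
      ((q.2 a.1 + a.2 q.1 - a.2 a.1 : ℝ) : EReal)) a ha).trans hlt.le
  · rintro ⟨M, hM⟩
    exact (iSup₂_le fun a ha => EReal.coe_le_coe_iff.2 (hM a ha)).trans_lt (EReal.coe_lt_top M)

lemma coupling_eq (q a : X × (X →L[ℝ] ℝ)) :
    (q.2 - a.2) (q.1 - a.1) = q.2 q.1 - (q.2 a.1 + a.2 q.1 - a.2 a.1) := by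
  simp only [sub_apply, map_sub]
  ring

lemma exists_le_coupling_of_mem_fitzDom {q : X × (X →L[ℝ] ℝ)} (hq : q ∈ fitzDom A) :
    ∃ c : ℝ, ∀ a ∈ A, c ≤ (q.2 - a.2) (q.1 - a.1) := by
  obtain ⟨M, hM⟩ := mem_fitzDom_iff.1 hq
  exact ⟨q.2 q.1 - M, fun a ha => by rw [coupling_eq]; linarith [hM a ha]⟩

lemma IsMonotoneOp.subset_fitzDom (hA : IsMonotoneOp A) : A ⊆ fitzDom A := fun q hq =>
  mem_fitzDom_iff.2 ⟨q.2 q.1, fun a ha => by linarith [coupling_eq q a, hA q hq a ha]⟩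

lemma convex_fitzDom (A : Set (X × (X →L[ℝ] ℝ))) : Convex ℝ (fitzDom A) := by
  intro q hq r hr t s ht hs hts
  obtain ⟨M, hM⟩ := mem_fitzDom_iff.1 hq
  obtain ⟨N, hN⟩ := mem_fitzDom_iff.1 hr
  refine mem_fitzDom_iff.2 ⟨t * M + s * N, fun a ha => ?_⟩
  simp only [Prod.smul_snd, Prod.smul_fst, Prod.snd_add, Prod.fst_add,
    add_apply, FunLike.coe_smul, Pi.smul_apply, smul_eq_mul,
    map_add, map_smul]
  have hcomb : a.2 a.1 = t * a.2 a.1 + s * a.2 a.1 := by rw [← add_mul, hts, one_mul]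
  linarith [mul_le_mul_of_nonneg_left (hM a ha) ht, mul_le_mul_of_nonneg_left (hN a ha) hs]

lemma exists_pos_neg_mul_lt (c : ℝ) {α : ℝ} (hα : 0 < α) : ∃ β > 0, -(α * β) < c := by
  refine ⟨(|c| + 1) / α, by positivity, ?_⟩
  rw [mul_div_cancel₀ _ hα.ne']
  linarith [neg_abs_le c]

lemma IsBRtype.fst_mem_closure_opDom (hbr : IsBRtype A) {q : X × (X →L[ℝ] ℝ)}
    (hq : q ∈ fitzDom A) : q.1 ∈ closure (opDom A) := by
  obtain ⟨c, hc⟩ := exists_le_coupling_of_mem_fitzDom hq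
  refine Metric.mem_closure_iff.2 fun ε hε => ?_
  obtain ⟨β, hβ, hεβ⟩ := exists_pos_neg_mul_lt c hε
  obtain ⟨b, hb, hnear, -⟩ := hbr q.1 q.2 ε β hε hβ ⟨c, hεβ, hc⟩
  exact ⟨b.1, mem_image_of_mem _ hb, by rwa [dist_eq_norm]⟩

lemma IsBRtype.snd_mem_closure_opRan (hbr : IsBRtype A) {q : X × (X →L[ℝ] ℝ)}
    (hq : q ∈ fitzDom A) : q.2 ∈ closure (opRan A) := by
  obtain ⟨c, hc⟩ := exists_le_coupling_of_mem_fitzDom hq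
  refine Metric.mem_closure_iff.2 fun ε hε => ?_
  obtain ⟨α, hα, hαε⟩ := exists_pos_neg_mul_lt c hε
  obtain ⟨b, hb, -, hnear⟩ := hbr q.1 q.2 α ε hα hε ⟨c, by rwa [mul_comm], hc⟩
  exact ⟨b.2, mem_image_of_mem _ hb, by rwa [dist_eq_norm]⟩

end

theorem closure_dom_ran_eq_proj_fitzDom_of_BR_general
    [NormedAddCommGroup X] [NormedSpace ℝ X]
    (A : Set (X × (X →L[ℝ] ℝ))) (hA : IsMaxMonotoneOp A) (hbr : IsBRtype A) :
    closure (opDom A) = closure (Prod.fst '' fitzDom A) ∧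
    closure (opRan A) = closure (Prod.snd '' fitzDom A) ∧
    Convex ℝ (closure (opDom A)) ∧ Convex ℝ (closure (opRan A)) := by
  have hsub := hA.1.subset_fitzDom
  have hdom : closure (opDom A) = closure (Prod.fst '' fitzDom A) :=
    (closure_mono (image_mono hsub)).antisymm <| closure_minimal
      (by rintro _ ⟨q, hq, rfl⟩; exact hbr.fst_mem_closure_opDom hq) isClosed_closure
  have hran : closure (opRan A) = closure (Prod.snd '' fitzDom A) :=
    (closure_mono (image_mono hsub)).antisymm <| closure_minimal
      (by rintro _ ⟨q, hq, rfl⟩; exact hbr.snd_mem_closure_opRan hq) isClosed_closure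
  refine ⟨hdom, hran, ?_, ?_⟩
  · rw [hdom]
    exact ((convex_fitzDom A).linear_image (LinearMap.fst ℝ X (X →L[ℝ] ℝ))).closure
  · rw [hran]
    exact ((convex_fitzDom A).linear_image (LinearMap.snd ℝ X (X →L[ℝ] ℝ))).closure

/-- Proposition: if `A` is maximally monotone of type (BR), then
`cl(dom A) = cl(P_X[dom F_A])` and `cl(ran A) = cl(P_{X*}[dom F_A])`; consequently
both `dom A` and `ran A` are nearly convex. -/
theorem closure_dom_ran_eq_proj_fitzDom_of_BR
    [NormedAddCommGroup X] [NormedSpace ℝ X] [CompleteSpace X]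
    (A : Set (X × (X →L[ℝ] ℝ))) (hA : IsMaxMonotoneOp A) (hbr : IsBRtype A) :
    closure (opDom A) = closure (Prod.fst '' fitzDom A) ∧
    closure (opRan A) = closure (Prod.snd '' fitzDom A) ∧
    Convex ℝ (closure (opDom A)) ∧ Convex ℝ (closure (opRan A)) :=
  closure_dom_ran_eq_proj_fitzDom_of_BR_general A hA hbr
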